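/- arXiv:2112.15510 — 4 statements merged into one kernel-verified Lean document; each statement's English description precedes it below -/
import Mathlib

section
/- Let the data (x_{0..L}, u_{0..L−1}) of the bilinear system be T-persistently exciting (G_T(L) full row rank). Then any input/state trajectory (ū_{[0,T−1]}, x̄_{[0,T]}) of the bilinear system can be written as [x̄_{[0,T]}; ū_{[0,T−1]}] = [H_{T+1}(x_{[0,L]}); H_T(u_{[0,L−1]})] α for some α ∈ ℝ^{L−T+1}. -/
open Matrix Finset

noncomputable section

/-- Kronecker product of vectors `x ∈ ℝ^n`, `u ∈ ℝ^m`, indexed by `Fin n × Fin m`. -/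
def kron {n m : ℕ} (x : Fin n → ℝ) (u : Fin m → ℝ) : Fin n × Fin m → ℝ :=
  fun p => x p.1 * u p.2

/-- One step of the bilinear dynamics `x⁺ = A x + B u + N (x ⊗ u)`. -/
def BilinStep {n m : ℕ} (A : Matrix (Fin n) (Fin n) ℝ) (B : Matrix (Fin n) (Fin m) ℝ)
    (N : Matrix (Fin n) (Fin n × Fin m) ℝ) (x : Fin n → ℝ) (u : Fin m → ℝ) : Fin n → ℝ :=
  A.mulVec x + B.mulVec u + N.mulVec (kron x u)

/-- The data matrix `G_T(L) = [H_1(x_{[0,L-T]}); H_T(u_{[0,L-1]}); H_T((x⊗u)_{[0,L-1]})]`. -/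
def GT {n m : ℕ} (x : ℕ → Fin n → ℝ) (u : ℕ → Fin m → ℝ) (T L : ℕ) :
    Matrix (Fin n ⊕ (Fin T × Fin m ⊕ Fin T × (Fin n × Fin m))) (Fin (L - T + 1)) ℝ :=
  Matrix.of fun r q =>
    match r with
    | Sum.inl a => x q a
    | Sum.inr (Sum.inl (i, b)) => u ((q : ℕ) + i) b
    | Sum.inr (Sum.inr (i, p)) => kron (x ((q : ℕ) + i)) (u ((q : ℕ) + i)) p

/-- Lemma 1(i): with `T`-persistently exciting data, any input/state
trajectory `(ū_{[0,T−1]}, x̄_{[0,T]})` of the bilinear system is a linear combination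
`[x̄; ū] = [H_{T+1}(x_{[0,L]}); H_T(u_{[0,L−1]})] α` of the data columns. -/
theorem trajectory_representation {n m : ℕ} (T L : ℕ)
    (hT : 1 ≤ T) (hTL : T ≤ L)
    (A : Matrix (Fin n) (Fin n) ℝ) (B : Matrix (Fin n) (Fin m) ℝ)
    (N : Matrix (Fin n) (Fin n × Fin m) ℝ)
    (x : ℕ → Fin n → ℝ) (u : ℕ → Fin m → ℝ)
    (hx : ∀ t < L, x (t + 1) = BilinStep A B N (x t) (u t))
    (hfull : (GT x u T L).rank =
      Fintype.card (Fin n ⊕ (Fin T × Fin m ⊕ Fin T × (Fin n × Fin m))))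
    (xbar : ℕ → Fin n → ℝ) (ubar : ℕ → Fin m → ℝ)
    (hbar : ∀ t < T, xbar (t + 1) = BilinStep A B N (xbar t) (ubar t)) :
    ∃ α : Fin (L - T + 1) → ℝ,
      (∀ t ≤ T, xbar t = ∑ q : Fin (L - T + 1), α q • x (t + q)) ∧
      (∀ t < T, ubar t = ∑ q : Fin (L - T + 1), α q • u (t + q)) := by

  classical
  -- `G_T(L)` has full row rank, hence `mulVec` is surjective
  have hrange : LinearMap.range (GT x u T L).mulVecLin = ⊤ := by
    apply Submodule.eq_top_of_finrank_eq
    rw [Module.finrank_pi]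
    simpa [Matrix.rank] using hfull
  set b : (Fin n ⊕ (Fin T × Fin m ⊕ Fin T × (Fin n × Fin m))) → ℝ :=
    Sum.elim (xbar 0) (Sum.elim (fun ib => ubar ib.1 ib.2)
      (fun ip => kron (xbar ip.1) (ubar ip.1) ip.2)) with hb
  obtain ⟨α, hα⟩ : ∃ α, (GT x u T L).mulVec α = b := by
    obtain ⟨α, hα⟩ := LinearMap.range_eq_top.mp hrange b
    exact ⟨α, by simpa [Matrix.mulVecLin_apply] using hα⟩
  have hrow : ∀ r, ∑ q, GT x u T L r q * α q = b r := by
    intro r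
    have := congrFun hα r
    simpa [Matrix.mulVec, dotProduct] using this
  have hx0 : ∀ a, ∑ q : Fin (L - T + 1), x (q : ℕ) a * α q = xbar 0 a := fun a => hrow (Sum.inl a)
  have hu : ∀ t, t < T → ∀ c, ∑ q : Fin (L - T + 1), u ((q : ℕ) + t) c * α q = ubar t c := by
    intro t ht c
    exact hrow (Sum.inr (Sum.inl (⟨t, ht⟩, c)))
  have hxu : ∀ t, t < T → ∀ p,
      ∑ q : Fin (L - T + 1), kron (x ((q : ℕ) + t)) (u ((q : ℕ) + t)) p * α q
        = kron (xbar t) (ubar t) p := by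
    intro t ht p
    exact hrow (Sum.inr (Sum.inr (⟨t, ht⟩, p)))
  have lin : ∀ {ι : Type} [Fintype ι] (M : Matrix (Fin n) ι ℝ)
      (v : Fin (L - T + 1) → ι → ℝ),
      M.mulVec (∑ q, α q • v q) = ∑ q, α q • M.mulVec (v q) := by
    intro ι _ M v
    simp only [← Matrix.mulVecLin_apply, map_sum, _root_.map_smul]
  have hU : ∀ t < T, ubar t = ∑ q : Fin (L - T + 1), α q • u (t + q) := by
    intro t ht
    funext c
    rw [← hu t ht c]
    simp only [Finset.sum_apply, Pi.smul_apply, smul_eq_mul]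
    exact Finset.sum_congr rfl fun q _ => by rw [Nat.add_comm, mul_comm]
  refine ⟨α, ?_, hU⟩
  intro t
  induction t with
  | zero =>
      intro _
      funext a
      rw [← hx0 a]
      simp only [Finset.sum_apply, Pi.smul_apply, smul_eq_mul, Nat.zero_add]
      exact Finset.sum_congr rfl fun q _ => mul_comm _ _
  | succ t ih =>
      intro hle
      have ht : t < T := hle
      have hxb := ih (Nat.le_of_lt ht)
      have hub := hU t ht
      have hkb : kron (xbar t) (ubar t)
          = ∑ q : Fin (L - T + 1), α q • kron (x (t + q)) (u (t + q)) := by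
        funext p
        rw [← hxu t ht p]
        simp only [Finset.sum_apply, Pi.smul_apply, smul_eq_mul]
        exact Finset.sum_congr rfl fun q _ => by rw [Nat.add_comm, mul_comm]
      rw [hbar t ht]
      unfold BilinStep
      rw [hkb, hxb, hub, lin, lin, lin, ← Finset.sum_add_distrib,
        ← Finset.sum_add_distrib]
      refine Finset.sum_congr rfl fun q _ => ?_
      have hqL : t + (q : ℕ) < L := by
        have := q.isLt
        omega
      rw [← smul_add, ← smul_add]
      congr 1
      have : x (t + (q : ℕ) + 1) = BilinStep A B N (x (t + q)) (u (t + q)) :=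
        hx _ hqL
      rw [show t + 1 + (q : ℕ) = t + (q : ℕ) + 1 from by omega, this]
      rfl
end
end

section
/- Let the data (x_{0..L}, u_{0..L−1}) be T-persistently exciting for the bilinear system. Let α ∈ ℝ^{L−T+1} satisfy the compatibility condition (x̄⊗ū)_{[0,T−1]} = H_T((x⊗u)_{[0,L−1]}) α, where x̄_{[0,T−1]} := H_T(x_{[0,L−1]}) α and ū_{[0,T−1]} := H_T(u_{[0,L−1]}) α. Then [H_{T+1}(x_{[0,L]}); H_T(u_{[0,L−1]})] α defines an input/state trajectory of the bilinear system over the horizon T; that is, setting x̄_{[0,T]} = H_{T+1}(x_{[0,L]}) α and ū_{[0,T−1]} = H_T(u_{[0,L−1]}) α, one has x̄(t+1) = A x̄(t) + B ū(t) + N(x̄(t)⊗ū(t)) for all t = 0,…,T−1. -/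
open Matrix Finset

noncomputable section

/-- Lemma 1(ii): with `T`-persistently exciting data, any `α` satisfying
the Kronecker compatibility constraint generates, via
`[H_{T+1}(x_{[0,L]}); H_T(u_{[0,L−1]})] α`, an input/state trajectory of the bilinear
system over the horizon `T`. -/
theorem alpha_generates_trajectory {n m : ℕ} (T L : ℕ)
    (hT : 1 ≤ T) (hTL : T ≤ L)
    (A : Matrix (Fin n) (Fin n) ℝ) (B : Matrix (Fin n) (Fin m) ℝ)
    (N : Matrix (Fin n) (Fin n × Fin m) ℝ)
    (x : ℕ → Fin n → ℝ) (u : ℕ → Fin m → ℝ)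
    (hx : ∀ t < L, x (t + 1) = BilinStep A B N (x t) (u t))
    (hfull : (GT x u T L).rank =
      Fintype.card (Fin n ⊕ (Fin T × Fin m ⊕ Fin T × (Fin n × Fin m))))
    (α : Fin (L - T + 1) → ℝ)
    (hcompat : ∀ t < T,
      kron (∑ q : Fin (L - T + 1), α q • x (t + q))
           (∑ q : Fin (L - T + 1), α q • u (t + q)) =
        ∑ q : Fin (L - T + 1), α q • kron (x (t + q)) (u (t + q))) :
    ∀ t < T,
      (∑ q : Fin (L - T + 1), α q • x (t + 1 + q)) =
        BilinStep A B N (∑ q : Fin (L - T + 1), α q • x (t + q))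
          (∑ q : Fin (L - T + 1), α q • u (t + q)) := by
  intro t ht
  have hstep : ∀ q : Fin (L - T + 1),
      x (t + 1 + (q : ℕ)) = BilinStep A B N (x (t + q)) (u (t + q)) := by
    intro q
    have hq : (q : ℕ) ≤ L - T := Nat.lt_succ_iff.mp q.isLt
    have hlt : t + (q : ℕ) < L := by omega
    have h := hx (t + q) hlt
    rw [show t + 1 + (q : ℕ) = t + (q : ℕ) + 1 by ring, h]
  simp only [hstep]
  unfold BilinStep
  rw [hcompat t ht]
  simp only [← Matrix.mulVecLin_apply, map_sum, _root_.map_smul, smul_add,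
    Finset.sum_add_distrib]
end
end

section
/- Suppose the pair (A, [B N]) is controllable (its reachable subspace is all of ℝ^n). Consider data of the bilinear system up to time t ≥ T, and suppose G_T(t) is not full row rank. If the 'new column' vector [x(t−T+1); u_{[t−T+1,t−1]}; (x⊗u)_{[t−T+1,t−1]}] lies in the image of [H_1(x_{[0,t−T]}); H_{T−1}(u_{[0,t−2]}); H_{T−1}((x⊗u)_{[0,t−2]})], then there exists a nonzero vector [ξ; η_1; …; η_T; χ_1; …; χ_T] in the left kernel of G_T(t) with (η_T, χ_T) ≠ (0, 0). -/
/-!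
Writing the bilinear system as the linear system `x(t+1) = A x(t) + [B N] w(t)` with input
`w = [u; x ⊗ u]`, `G_T(t)` becomes the block Hankel matrix of `(x, w)`. If every vector of its left
kernel had a zero last block, the left kernel would be invariant under the shift
`(ξ, ζ₀, …, ζ_{T-1}) ↦ (ξ A, ξ [B N], ζ₀, …, ζ_{T-2})`: the dynamics carries each column of
`G_T(t)` to the next one, and the hypothesis on the new column covers the last. Along the shifts of
a nonzero kernel vector the last blocks run through `ζ_{T-1}, …, ζ₀, ξ [B N], ξ A [B N], …`, so all
of these vanish, and controllability forces `ξ = 0` as well.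
-/

open Matrix Finset

noncomputable section

/-- Controllability matrix of the pair `(A, [B N])`. -/
def ctrbMat {n m : ℕ} (A : Matrix (Fin n) (Fin n) ℝ) (B : Matrix (Fin n) (Fin m) ℝ)
    (N : Matrix (Fin n) (Fin n × Fin m) ℝ) :
    Matrix (Fin n) (Fin n × (Fin m ⊕ Fin n × Fin m)) ℝ :=
  Matrix.of fun a kj => (A ^ (kj.1 : ℕ) * Matrix.fromCols B N) a kj.2

theorem Matrix.linearIndependent_row_iff_rank_eq_card {R m n : Type*} [Field R] [Fintype m]
    [Fintype n] {M : Matrix m n R} :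
    LinearIndependent R M.row ↔ M.rank = Fintype.card m :=
  ⟨LinearIndependent.rank_matrix, fun h => by
    rw [linearIndependent_iff_card_eq_finrank_span, Set.finrank, ← rank_eq_finrank_span_row, h]⟩

theorem Matrix.exists_ne_zero_vecMul_eq_zero_of_rank_ne_card {R m n : Type*} [Field R]
    [Fintype m] [Fintype n] {M : Matrix m n R} (h : M.rank ≠ Fintype.card m) :
    ∃ v ≠ 0, v ᵥ* M = 0 := by
  by_contra! hv
  refine h (linearIndependent_row_iff_rank_eq_card.mp (vecMul_injective_iff.mp ?_))
  rw [← coe_vecMulLinear, injective_iff_map_eq_zero]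
  exact fun v h0 => by_contra fun hne => hv v hne h0

theorem Matrix.eq_zero_of_vecMul_eq_zero_of_rank_eq_card {R m n : Type*} [Field R]
    [Fintype m] [Fintype n] {M : Matrix m n R} (h : M.rank = Fintype.card m) {v : m → R}
    (hv : v ᵥ* M = 0) : v = 0 :=
  vecMul_injective_iff.mpr (linearIndependent_row_iff_rank_eq_card.mpr h)
    (hv.trans (zero_vecMul M).symm)

def consBlock {α : Type*} (a : α) (ζ : ℕ → α) : ℕ → α
  | 0 => a
  | i + 1 => ζ i

section HankelAnnihilator

variable {K σ ι : Type*} [CommSemiring K] [Fintype σ]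

def hankelShift (A : Matrix σ σ K) (M : Matrix σ ι K) (z : (σ → K) × (ℕ → ι → K)) :
    (σ → K) × (ℕ → ι → K) :=
  (z.1 ᵥ* A, consBlock (z.1 ᵥ* M) z.2)

theorem hankelShift_iterate_snd_add (A : Matrix σ σ K) (M : Matrix σ ι K)
    (z : (σ → K) × (ℕ → ι → K)) (j k : ℕ) :
    ((hankelShift A M)^[k] z).2 (j + k) = z.2 j := by
  induction k with
  | zero => rfl
  | succ k ih => rw [Function.iterate_succ_apply', ← add_assoc]; exact ih

theorem hankelShift_iterate_fst [DecidableEq σ] (A : Matrix σ σ K) (M : Matrix σ ι K)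
    (z : (σ → K) × (ℕ → ι → K)) (k : ℕ) :
    ((hankelShift A M)^[k] z).1 = z.1 ᵥ* (A ^ k) := by
  induction k with
  | zero => simp
  | succ k ih =>
    rw [Function.iterate_succ_apply', hankelShift, ih, vecMul_vecMul, pow_succ]

theorem hankelShift_iterate_snd [DecidableEq σ] (A : Matrix σ σ K) (M : Matrix σ ι K)
    (z : (σ → K) × (ℕ → ι → K)) (j k : ℕ) :
    ((hankelShift A M)^[j + (k + 1)] z).2 j = z.1 ᵥ* (A ^ k * M) := by
  have h := hankelShift_iterate_snd_add A M ((hankelShift A M)^[k + 1] z) 0 j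
  rw [zero_add] at h
  rw [Function.iterate_add_apply, h, Function.iterate_succ_apply']
  simp only [hankelShift, consBlock, hankelShift_iterate_fst, vecMul_vecMul]

variable [Fintype ι]

/-- The pairing of the row `[ξ; ζ 0; …; ζ (T-1)]` with the column `q` of the depth-`T` block Hankel
matrix of the state `x` and the input `w`. -/
def hankelPairing (x : ℕ → σ → K) (w : ℕ → ι → K) (T : ℕ) (z : (σ → K) × (ℕ → ι → K))
    (q : ℕ) : K :=
  z.1 ⬝ᵥ x q + ∑ i ∈ range T, z.2 i ⬝ᵥ w (q + i)

/-- `z` lies in the left kernel of the depth-`T` Hankel matrix with columns `0, …, L`. -/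
def AnnihilatesHankel (x : ℕ → σ → K) (w : ℕ → ι → K) (T L : ℕ)
    (z : (σ → K) × (ℕ → ι → K)) : Prop :=
  ∀ q ≤ L, hankelPairing x w T z q = 0

variable {A : Matrix σ σ K} {M : Matrix σ ι K} {x : ℕ → σ → K} {w : ℕ → ι → K} {T L : ℕ}

theorem hankelPairing_hankelShift {q : ℕ} (hq : x (q + 1) = A *ᵥ x q + M *ᵥ w q)
    (z : (σ → K) × (ℕ → ι → K)) :
    hankelPairing x w (T + 1) (hankelShift A M z) q = hankelPairing x w T z (q + 1) := by
  simp only [hankelPairing, hankelShift, sum_range_succ', consBlock, add_zero, hq,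
    add_right_comm q 1, add_assoc, dotProduct_add, dotProduct_mulVec]
  ring

theorem hankelPairing_succ_of_last_eq_zero {z : (σ → K) × (ℕ → ι → K)} (hz : z.2 T = 0)
    (q : ℕ) : hankelPairing x w (T + 1) z q = hankelPairing x w T z q := by
  simp only [hankelPairing, sum_range_succ, hz, zero_dotProduct, add_zero]

theorem hankelPairing_eq_sum_of_column_eq_sum (β : Fin (L + 1) → K)
    (hx : x (L + 1) = ∑ q : Fin (L + 1), β q • x q)
    (hw : ∀ i < T, w (L + 1 + i) = ∑ q : Fin (L + 1), β q • w (q + i))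
    (z : (σ → K) × (ℕ → ι → K)) :
    hankelPairing x w T z (L + 1) = ∑ q : Fin (L + 1), β q * hankelPairing x w T z q := by
  have hw' : ∑ i ∈ range T, z.2 i ⬝ᵥ w (L + 1 + i) =
      ∑ i ∈ range T, z.2 i ⬝ᵥ ∑ q : Fin (L + 1), β q • w (q + i) :=
    sum_congr rfl fun i hi => by rw [hw i (mem_range.mp hi)]
  simp only [hankelPairing, hw', hx, dotProduct_sum, dotProduct_smul, smul_eq_mul, mul_add,
    sum_add_distrib, mul_sum]
  rw [sum_comm (s := range T)]

theorem AnnihilatesHankel.shift (hx : ∀ s ≤ L, x (s + 1) = A *ᵥ x s + M *ᵥ w s)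
    (hnew : ∀ z, AnnihilatesHankel x w T L z → hankelPairing x w T z (L + 1) = 0)
    {z : (σ → K) × (ℕ → ι → K)} (hz : AnnihilatesHankel x w (T + 1) L z) (hlast : z.2 T = 0) :
    AnnihilatesHankel x w (T + 1) L (hankelShift A M z) := by
  have hz' : AnnihilatesHankel x w T L z := fun q hq => by
    rw [← hankelPairing_succ_of_last_eq_zero hlast]; exact hz q hq
  intro q hq
  rw [hankelPairing_hankelShift (hx q hq)]
  rcases hq.lt_or_eq with hq | rfl
  · exact hz' (q + 1) hq
  · exact hnew z hz'

theorem AnnihilatesHankel.exists_last_ne_zero [DecidableEq σ]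
    (hctrb : ∀ ξ : σ → K, (∀ k, ξ ᵥ* (A ^ k * M) = 0) → ξ = 0)
    (hx : ∀ s ≤ L, x (s + 1) = A *ᵥ x s + M *ᵥ w s)
    (hnew : ∀ z, AnnihilatesHankel x w T L z → hankelPairing x w T z (L + 1) = 0)
    {z : (σ → K) × (ℕ → ι → K)} (hz : AnnihilatesHankel x w (T + 1) L z)
    (hz0 : z.1 ≠ 0 ∨ ∃ j ≤ T, z.2 j ≠ 0) :
    ∃ z', AnnihilatesHankel x w (T + 1) L z' ∧ z'.2 T ≠ 0 := by
  by_contra! hlast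
  have hiter (k : ℕ) : AnnihilatesHankel x w (T + 1) L ((hankelShift A M)^[k] z) := by
    induction k with
    | zero => exact hz
    | succ k ih =>
      rw [Function.iterate_succ_apply']
      exact ih.shift hx hnew (hlast _ ih)
  have hzero (k : ℕ) : ((hankelShift A M)^[k] z).2 T = 0 := hlast _ (hiter k)
  rcases hz0 with hξ | ⟨j, hj, hζ⟩
  · exact hξ (hctrb _ fun k => (hankelShift_iterate_snd A M z T k).symm.trans (hzero _))
  · rw [← hankelShift_iterate_snd_add A M z j (T - j), Nat.add_sub_cancel' hj] at hζ
    exact hζ (hzero _)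

end HankelAnnihilator

section Bilinear

variable {n m : ℕ}

theorem eq_zero_of_forall_vecMul_pow_mul_fromCols_eq_zero {A : Matrix (Fin n) (Fin n) ℝ}
    {B : Matrix (Fin n) (Fin m) ℝ} {N : Matrix (Fin n) (Fin n × Fin m) ℝ}
    (hctrb : (ctrbMat A B N).rank = n) {ξ : Fin n → ℝ}
    (h : ∀ k, ξ ᵥ* (A ^ k * fromCols B N) = 0) : ξ = 0 :=
  eq_zero_of_vecMul_eq_zero_of_rank_eq_card (hctrb.trans (Fintype.card_fin n).symm) <|
    funext fun kj => congrFun (h kj.1) kj.2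

def bilinInput (x : ℕ → Fin n → ℝ) (u : ℕ → Fin m → ℝ) (s : ℕ) : Fin m ⊕ Fin n × Fin m → ℝ :=
  Sum.elim (u s) (kron (x s) (u s))

theorem bilinStep_eq_mulVec_add (A : Matrix (Fin n) (Fin n) ℝ) (B : Matrix (Fin n) (Fin m) ℝ)
    (N : Matrix (Fin n) (Fin n × Fin m) ℝ) (x : ℕ → Fin n → ℝ) (u : ℕ → Fin m → ℝ) (s : ℕ) :
    BilinStep A B N (x s) (u s) = A *ᵥ x s + fromCols B N *ᵥ bilinInput x u s := by
  rw [bilinInput, fromCols_mulVec_sumElim, BilinStep, add_assoc]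

theorem blockSum_eq_hankelPairing (x : ℕ → Fin n → ℝ) (u : ℕ → Fin m → ℝ) (T q : ℕ)
    (z : (Fin n → ℝ) × (ℕ → Fin m ⊕ Fin n × Fin m → ℝ)) :
    (∑ a, z.1 a * x q a) + (∑ i : Fin T, ∑ b, z.2 i (Sum.inl b) * u (q + i) b) +
        (∑ i : Fin T, ∑ p, z.2 i (Sum.inr p) * kron (x (q + i)) (u (q + i)) p) =
      hankelPairing x (bilinInput x u) T z q := by
  simp only [hankelPairing, dotProduct, bilinInput, Fintype.sum_sum_type, Sum.elim_inl,
    Sum.elim_inr, sum_add_distrib, Fin.sum_univ_eq_sum_range (fun i => ∑ b, z.2 i (Sum.inl b) * u (q + i) b),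
    Fin.sum_univ_eq_sum_range (fun i => ∑ p, z.2 i (Sum.inr p) * kron (x (q + i)) (u (q + i)) p),
    add_assoc]

/-- The row vector `[ξ; η₀; …; η_{T-1}; χ₀; …; χ_{T-1}]` of `G_T` as the pair `(ξ, i ↦ [ηᵢ; χᵢ])`,
padded by zero blocks. -/
def rowToPair {T : ℕ} (v : Fin n ⊕ (Fin T × Fin m ⊕ Fin T × (Fin n × Fin m)) → ℝ) :
    (Fin n → ℝ) × (ℕ → Fin m ⊕ Fin n × Fin m → ℝ) :=
  (fun a => v (Sum.inl a), fun i =>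
    if h : i < T then
      Sum.elim (fun b => v (Sum.inr (Sum.inl (⟨i, h⟩, b))))
        (fun p => v (Sum.inr (Sum.inr (⟨i, h⟩, p))))
    else 0)

theorem rowToPair_ne_zero {T : ℕ} {v : Fin n ⊕ (Fin T × Fin m ⊕ Fin T × (Fin n × Fin m)) → ℝ}
    (hv : v ≠ 0) : (rowToPair v).1 ≠ 0 ∨ ∃ j < T, (rowToPair v).2 j ≠ 0 := by
  by_contra! h
  refine hv (funext fun r => ?_)
  rcases r with a | ⟨i, b⟩ | ⟨i, p⟩
  · exact congrFun h.1 a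
  · simpa [rowToPair] using congrFun (h.2 i i.isLt) (Sum.inl b)
  · simpa [rowToPair] using congrFun (h.2 i i.isLt) (Sum.inr p)

theorem vecMul_GT_apply {x : ℕ → Fin n → ℝ} {u : ℕ → Fin m → ℝ} {T L : ℕ}
    (v : Fin n ⊕ (Fin T × Fin m ⊕ Fin T × (Fin n × Fin m)) → ℝ) (q : Fin (L - T + 1)) :
    (v ᵥ* GT x u T L) q = hankelPairing x (bilinInput x u) T (rowToPair v) q := by
  rw [← blockSum_eq_hankelPairing]
  simp [vecMul, dotProduct, GT, rowToPair, Fintype.sum_sum_type, Fintype.sum_prod_type, mul_comm,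
    add_assoc]

end Bilinear

/-- Proposition 2: if `(A,[B N])` is controllable, `G_T(t)` is not full
row rank, and the new column lies in the image of the shortened data matrix, then the
left kernel of `G_T(t)` contains a vector `[ξ; η₁;…;η_T; χ₁;…;χ_T]` with
`(η_T, χ_T) ≠ (0,0)`. -/
theorem left_kernel_last_block_nonzero {n m : ℕ} (T t : ℕ)
    (hT : 1 ≤ T) (hTt : T ≤ t)
    (A : Matrix (Fin n) (Fin n) ℝ) (B : Matrix (Fin n) (Fin m) ℝ)
    (N : Matrix (Fin n) (Fin n × Fin m) ℝ)
    (hctrb : (ctrbMat A B N).rank = n)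
    (x : ℕ → Fin n → ℝ) (u : ℕ → Fin m → ℝ)
    (hx : ∀ s < t, x (s + 1) = BilinStep A B N (x s) (u s))
    (hnotfull : (GT x u T t).rank ≠
      Fintype.card (Fin n ⊕ (Fin T × Fin m ⊕ Fin T × (Fin n × Fin m))))
    (himg : ∃ β : Fin (t - T + 1) → ℝ,
      x (t - T + 1) = (∑ q : Fin (t - T + 1), β q • x q) ∧
      (∀ i : Fin (T - 1), u (t - T + 1 + i) =
        ∑ q : Fin (t - T + 1), β q • u (q + i)) ∧
      (∀ i : Fin (T - 1), kron (x (t - T + 1 + i)) (u (t - T + 1 + i)) =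
        ∑ q : Fin (t - T + 1), β q • kron (x ((q : ℕ) + i)) (u ((q : ℕ) + i)))) :
    ∃ (ξ : Fin n → ℝ) (η : Fin T → Fin m → ℝ) (χ : Fin T → Fin n × Fin m → ℝ),
      (∀ q : Fin (t - T + 1),
        (∑ a, ξ a * x q a) +
        (∑ i : Fin T, ∑ b, η i b * u ((q : ℕ) + i) b) +
        (∑ i : Fin T, ∑ p, χ i p * kron (x ((q : ℕ) + i)) (u ((q : ℕ) + i)) p) = 0) ∧
      (η ⟨T - 1, by omega⟩ ≠ 0 ∨ χ ⟨T - 1, by omega⟩ ≠ 0) := by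
  obtain ⟨T, rfl⟩ : ∃ T', T = T' + 1 := ⟨T - 1, by omega⟩
  obtain ⟨β, hβx, hβu, hβw⟩ := himg
  have hdyn (s : ℕ) (hs : s ≤ t - (T + 1)) :
      x (s + 1) = A *ᵥ x s + fromCols B N *ᵥ bilinInput x u s := by
    rw [hx s (by omega), bilinStep_eq_mulVec_add]
  have hnew (z) (hz : AnnihilatesHankel x (bilinInput x u) T (t - (T + 1)) z) :
      hankelPairing x (bilinInput x u) T z (t - (T + 1) + 1) = 0 := by
    rw [hankelPairing_eq_sum_of_column_eq_sum β hβx fun i hi => ?_]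
    · exact sum_eq_zero fun q _ => by rw [hz q (by omega), mul_zero]
    · ext (b | p)
      · simp [bilinInput, hβu ⟨i, by omega⟩, Finset.sum_apply]
      · simp [bilinInput, hβw ⟨i, by omega⟩, Finset.sum_apply]
  obtain ⟨v, hv0, hv⟩ := exists_ne_zero_vecMul_eq_zero_of_rank_ne_card hnotfull
  have hvz : AnnihilatesHankel x (bilinInput x u) (T + 1) (t - (T + 1)) (rowToPair v) :=
    fun q hq => by rw [← vecMul_GT_apply (L := t) v ⟨q, by omega⟩, hv, Pi.zero_apply]
  obtain ⟨z, hz, hzT⟩ := hvz.exists_last_ne_zero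
    (fun _ => eq_zero_of_forall_vecMul_pow_mul_fromCols_eq_zero hctrb) hdyn hnew
    ((rowToPair_ne_zero hv0).imp_right fun ⟨j, hj, hζ⟩ => ⟨j, by omega, hζ⟩)
  refine ⟨z.1, fun i b => z.2 i (Sum.inl b), fun i p => z.2 i (Sum.inr p),
    fun q => by rw [blockSum_eq_hankelPairing]; exact hz q (by omega), ?_⟩
  by_contra! h
  exact hzT (funext fun r => r.rec (congrFun h.1) (congrFun h.2))
end
end

section
/- (Data-based reformulation, Theorem 2.) Assume the data (x_{0..L}, u_{0..L−1}) of the bilinear system is T-persistently exciting. Then (ū_{[0,T−1]}, x̄_{[0,T]}) is a feasible point of the model-based optimal control problem P1 (i.e., x̄ is a trajectory of the bilinear system driven by ū with x̄(0)=x_0 and x̄(T)=x_f) if and only if there exists α ∈ ℝ^{L−T+1} such that [x̄_{[0,T]}; ū_{[0,T−1]}] = [H_{T+1}(x_{[0,L]}); H_T(u_{[0,L−1]})] α, the compatibility constraint (x̄⊗ū)_{[0,T−1]} = H_T((x⊗u)_{[0,L−1]}) α holds, and x̄(0)=x_0, x̄(T)=x_f. Consequently the two optimization problems P1 and P2 have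 the same feasible trajectories and the same optimal value. -/
open Matrix Finset

noncomputable section

private lemma mulVec_sum_smul {ι p q : Type*} [Fintype ι] [Fintype q]
    (M : Matrix p q ℝ) (α : ι → ℝ) (v : ι → q → ℝ) :
    M.mulVec (∑ i, α i • v i) = ∑ i, α i • M.mulVec (v i) := by
  have h : M.mulVec (∑ i, α i • v i) = M.mulVecLin (∑ i, α i • v i) := rfl
  rw [h, map_sum]
  simp [Matrix.mulVecLin_apply]

private lemma step_sum {n m : ℕ} (T L : ℕ) (hTL : T ≤ L)
    (A : Matrix (Fin n) (Fin n) ℝ) (B : Matrix (Fin n) (Fin m) ℝ)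
    (N : Matrix (Fin n) (Fin n × Fin m) ℝ)
    (x : ℕ → Fin n → ℝ) (u : ℕ → Fin m → ℝ)
    (hx : ∀ t < L, x (t + 1) = BilinStep A B N (x t) (u t))
    (α : Fin (L - T + 1) → ℝ) (t : ℕ) (ht : t < T) :
    (∑ q : Fin (L - T + 1), α q • x ((t + 1) + q)) =
      A.mulVec (∑ q : Fin (L - T + 1), α q • x (t + q)) +
      B.mulVec (∑ q : Fin (L - T + 1), α q • u (t + q)) +
      N.mulVec (∑ q : Fin (L - T + 1), α q • kron (x (t + q)) (u (t + q))) := by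
  rw [mulVec_sum_smul, mulVec_sum_smul, mulVec_sum_smul, ← Finset.sum_add_distrib,
    ← Finset.sum_add_distrib]
  refine Finset.sum_congr rfl fun q _ => ?_
  rw [← smul_add, ← smul_add]
  congr 1
  have hq : (q : ℕ) < L - T + 1 := q.isLt
  have hlt : t + (q : ℕ) < L := by omega
  rw [show (t + 1) + (q : ℕ) = (t + (q : ℕ)) + 1 by omega, hx _ hlt]
  rfl

/-- Theorem 2: with `T`-persistently exciting data, `(ū, x̄)` is feasible
for the model-based problem (P1) iff it admits the data-based representation with the
Kronecker compatibility constraint, i.e., (P1) and (P2) have the same feasible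
trajectories. -/
theorem data_based_reformulation {n m : ℕ} (T L : ℕ)
    (hT : 1 ≤ T) (hTL : T ≤ L)
    (A : Matrix (Fin n) (Fin n) ℝ) (B : Matrix (Fin n) (Fin m) ℝ)
    (N : Matrix (Fin n) (Fin n × Fin m) ℝ)
    (x : ℕ → Fin n → ℝ) (u : ℕ → Fin m → ℝ)
    (hx : ∀ t < L, x (t + 1) = BilinStep A B N (x t) (u t))
    (hfull : (GT x u T L).rank =
      Fintype.card (Fin n ⊕ (Fin T × Fin m ⊕ Fin T × (Fin n × Fin m))))
    (x0 xf : Fin n → ℝ) (xbar : ℕ → Fin n → ℝ) (ubar : ℕ → Fin m → ℝ) :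
    ((∀ t < T, xbar (t + 1) = BilinStep A B N (xbar t) (ubar t)) ∧
        xbar 0 = x0 ∧ xbar T = xf) ↔
      (∃ α : Fin (L - T + 1) → ℝ,
        (∀ t ≤ T, xbar t = ∑ q : Fin (L - T + 1), α q • x (t + q)) ∧
        (∀ t < T, ubar t = ∑ q : Fin (L - T + 1), α q • u (t + q)) ∧
        (∀ t < T, kron (xbar t) (ubar t) =
          ∑ q : Fin (L - T + 1), α q • kron (x (t + q)) (u (t + q))) ∧
        xbar 0 = x0 ∧ xbar T = xf) := by
  constructor
  · rintro ⟨hfeas, h0, hTf⟩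
    -- surjectivity from full row rank
    have hsurj : Function.Surjective (GT x u T L).mulVecLin := by
      rw [← LinearMap.range_eq_top]
      apply Submodule.eq_top_of_finrank_eq
      rw [← Matrix.rank, hfull, Module.finrank_fintype_fun_eq_card]
    set b : (Fin n ⊕ (Fin T × Fin m ⊕ Fin T × (Fin n × Fin m))) → ℝ :=
      fun r => match r with
        | Sum.inl a => xbar 0 a
        | Sum.inr (Sum.inl (i, c)) => ubar i c
        | Sum.inr (Sum.inr (i, p)) => kron (xbar i) (ubar i) p with hb
    obtain ⟨α, hα⟩ := hsurj b
    have hα' : ∀ r, ∑ q : Fin (L - T + 1), GT x u T L r q * α q = b r := by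
      intro r
      have := congrFun hα r
      simpa [Matrix.mulVecLin_apply, Matrix.mulVec, dotProduct] using this
    have hu : ∀ t < T, ubar t = ∑ q : Fin (L - T + 1), α q • u (t + q) := by
      intro t ht
      funext c
      have := hα' (Sum.inr (Sum.inl (⟨t, ht⟩, c)))
      simp only [GT, Matrix.of_apply, hb] at this
      rw [Finset.sum_apply]
      rw [← this]
      refine Finset.sum_congr rfl fun q _ => ?_
      simp [mul_comm, Nat.add_comm]
    have hk : ∀ t < T, kron (xbar t) (ubar t) =
        ∑ q : Fin (L - T + 1), α q • kron (x (t + q)) (u (t + q)) := by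
      intro t ht
      funext p
      have := hα' (Sum.inr (Sum.inr (⟨t, ht⟩, p)))
      simp only [GT, Matrix.of_apply, hb] at this
      rw [Finset.sum_apply]
      rw [← this]
      refine Finset.sum_congr rfl fun q _ => ?_
      simp [mul_comm, Nat.add_comm]
    have hxb : ∀ t, t ≤ T → xbar t = ∑ q : Fin (L - T + 1), α q • x (t + q) := by
      intro t
      induction t with
      | zero =>
        intro _
        funext a
        have := hα' (Sum.inl a)
        simp only [GT, Matrix.of_apply, hb] at this
        rw [Finset.sum_apply]
        rw [← this]
        refine Finset.sum_congr rfl fun q _ => ?_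
        simp [mul_comm]
      | succ t ih =>
        intro h
        have ht : t < T := h
        rw [hfeas t ht, BilinStep, hk t ht, ih (le_of_lt ht), hu t ht,
          step_sum T L hTL A B N x u hx α t ht]
    exact ⟨α, hxb, hu, hk, h0, hTf⟩
  · rintro ⟨α, hxb, hu, hk, h0, hTf⟩
    refine ⟨fun t ht => ?_, h0, hTf⟩
    rw [hxb (t + 1) (by omega), BilinStep, hk t ht, hxb t (le_of_lt ht), hu t ht,
      step_sum T L hTL A B N x u hx α t ht]
end
end
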